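/- If (V, ‖·‖) is a two-dimensional real normed space, then every horofunction of (V, ‖·‖) is a Busemann point. -/

import Mathlib

open Filter Topology Set

noncomputable section

variable {V : Type*} [NormedAddCommGroup V] [NormedSpace ℝ V]

/-- `φ_z(x) = ‖z − x‖ − ‖z‖`. -/
def phi (z : V) : V → ℝ := fun x => ‖z - x‖ - ‖z‖

/-- A horofunction: a limit, uniformly on compact sets, of functions `φ_{z_n}`,
which is not itself of the form `φ_z`. -/
def IsHorofunction (h : V → ℝ) : Prop :=
  (∃ z : ℕ → V, ∀ K : Set V, IsCompact K →
      TendstoUniformlyOn (fun n x => phi (z n) x) h atTop K) ∧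
  ∀ z : V, h ≠ phi z

/-- An almost-geodesic: a map `γ` defined on an unbounded subset `T` of `[0,∞)`
containing `0` such that for every `ε > 0`,
`|‖γ(t) − γ(s)‖ + ‖γ(s) − γ(0)‖ − t| < ε` for all sufficiently large `s ≤ t` in `T`. -/
def IsAlmostGeodesic (T : Set ℝ) (γ : ℝ → V) : Prop :=
  T ⊆ Set.Ici (0 : ℝ) ∧ (0 : ℝ) ∈ T ∧ ¬ BddAbove T ∧
  ∀ ε > (0 : ℝ), ∃ M : ℝ, ∀ s ∈ T, ∀ t ∈ T, M ≤ s → s ≤ t →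
    |‖γ t - γ s‖ + ‖γ s - γ 0‖ - t| < ε

/-- A Busemann point: a horofunction which is the limit, uniformly on compact sets,
of `φ_{γ(t)}` along an almost-geodesic `γ`. -/
def IsBusemannPoint (h : V → ℝ) : Prop :=
  IsHorofunction h ∧
  ∃ (T : Set ℝ) (γ : ℝ → V), IsAlmostGeodesic T γ ∧
    ∀ K : Set V, IsCompact K → ∀ ε > (0 : ℝ), ∃ M : ℝ, ∀ t ∈ T, M ≤ t →
      ∀ x ∈ K, |phi (γ t) x - h x| < ε

/-!
Let `φ_{z_n} → h`. Since `h` is not some `φ_w`, `‖z_n‖ → ∞`; along a subsequence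
`z_n / ‖z_n‖ → u`, and in a basis `(u, v)` we get `z_n = a_n u + b_n v` with `a_n → ∞` and
`b_n / a_n → 0`. In every case we produce points `y_k` with `φ_{y_k} → h` whose defect
`‖y_l - y_k‖ + ‖y_k‖ - ‖y_l‖` tends to `0`; reparametrised by `‖y_k‖` they form an almost-geodesic.

If `b_n → c` along a subsequence, take `y_k = k u + c v`: the defect is a difference of values of
the decreasing bounded function `t ↦ ‖t u + c v‖ - t`, and this function is `1`-Lipschitz in
`c v`, so `φ_{z_n}` and `φ_{y_k}` have the same limit.

Otherwise we may assume `b_n → ∞`. Among the functionals `L` with `‖L‖ ≤ 1`, `L u = 1` pick one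
maximising `L v`; then `‖u + σ v‖ - L (u + σ v) = o(σ)` as `σ → 0⁺`. Hence the convex nonnegative
function `r = ‖·‖ - L` is `o(b_n)` on a neighbourhood of `z_n` of size comparable to `b_n`, which
forces `r (z_n - x) - r z_n → 0`, i.e. `h = -L`. For `y_k = A_k u + k v` with `A_k` growing fast
the defect `r (y_l - y_k) + r y_k - r y_l` tends to `0` as well.
-/

section Metric

variable {E : Type*} [NormedAddCommGroup E]

lemma lipschitzWith_phi (z : E) : LipschitzWith 1 (phi z) :=
  LipschitzWith.of_dist_le_mul fun x y => by
    simpa [phi, Real.dist_eq, dist_eq_norm, norm_sub_rev x y] using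
      abs_norm_sub_norm_le (z - x) (z - y)

lemma tendsto_phi_of_tendsto {z : ℕ → E} {w : E} (hz : Tendsto z atTop (𝓝 w)) (x : E) :
    Tendsto (fun n => phi (z n) x) atTop (𝓝 (phi w x)) :=
  ((hz.sub_const x).norm).sub hz.norm

lemma tendsto_norm_atTop_of_tendsto_phi [ProperSpace E] {z : ℕ → E} {h : E → ℝ}
    (hlim : ∀ x, Tendsto (fun n => phi (z n) x) atTop (𝓝 (h x))) (hh : ∀ w, h ≠ phi w) :
    Tendsto (fun n => ‖z n‖) atTop atTop := by
  refine tendsto_atTop.2 fun B => ?_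
  by_contra hB
  obtain ⟨w, -, φ, hφ, hw⟩ := tendsto_subseq_of_frequently_bounded
    (Metric.isBounded_closedBall (x := (0 : E)) (r := B))
    ((not_eventually.1 hB).mono fun n hn => by simpa using (not_le.1 hn).le)
  exact hh w (funext fun x =>
    tendsto_nhds_unique ((hlim x).comp hφ.tendsto_atTop) (tendsto_phi_of_tendsto hw x))

lemma tendstoUniformlyOn_phi {y : ℕ → E} {h : E → ℝ}
    (hlim : ∀ x, Tendsto (fun n => phi (y n) x) atTop (𝓝 (h x))) {K : Set E} (hK : IsCompact K) :
    TendstoUniformlyOn (fun n => phi (y n)) h atTop K := by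
  have heq : Equicontinuous (fun n => phi (y n)) :=
    (LipschitzWith.uniformEquicontinuous _ 1 fun n => lipschitzWith_phi (y n)).equicontinuous
  have := (EquicontinuousOn.tendsto_uniformOnFun_iff_pi (𝔖 := {K | IsCompact K}) (fun _ hK => hK)
    (sUnion_eq_univ_iff.2 fun x => ⟨{x}, isCompact_singleton, rfl⟩)
    (fun K _ => heq.equicontinuousOn K) atTop h).2 (tendsto_pi_nhds.2 hlim)
  exact UniformOnFun.tendsto_iff_tendstoUniformlyOn.1 this K hK

lemma exists_index_of_mem_insert_range {t : ℕ → ℝ} (ht : StrictMono t) (ht0 : ∀ k, 0 ≤ t k)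
    {N : ℕ} {s : ℝ} (hs : s ∈ insert 0 (range t)) (hNs : t N + 1 ≤ s) :
    ∃ k, N ≤ k ∧ t k = s := by
  obtain rfl | ⟨k, rfl⟩ := hs
  · linarith [ht0 N]
  · exact ⟨k, ht.le_iff_le.1 (by linarith), rfl⟩

lemma isAlmostGeodesic_extend {y : ℕ → E} (hmono : StrictMono fun k => ‖y k‖)
    (hunb : Tendsto (fun k => ‖y k‖) atTop atTop)
    (hdefect : ∀ ε > 0, ∀ᶠ k in atTop, ∀ l ≥ k, ‖y l - y k‖ + ‖y k‖ - ‖y l‖ < ε) :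
    IsAlmostGeodesic (insert 0 (range fun k => ‖y k‖)) (Function.extend (fun k => ‖y k‖) y 0) := by
  set t := fun k => ‖y k‖
  have hγ : ∀ k, Function.extend t y 0 (t k) = y k := hmono.injective.extend_apply y 0
  have hγ0 : Function.extend t y 0 0 = 0 := by
    by_cases h0 : ∃ k, t k = 0
    · obtain ⟨k, hk⟩ := h0
      rw [← hk, hγ]
      exact norm_eq_zero.1 hk
    · exact Function.extend_apply' _ _ _ h0
  refine ⟨?_, mem_insert _ _, ?_, fun ε hε => ?_⟩
  · rintro s (rfl | ⟨k, rfl⟩)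
    exacts [self_mem_Ici, norm_nonneg (y k)]
  · rintro ⟨B, hB⟩
    obtain ⟨k, hk⟩ := (hunb.eventually_gt_atTop B).exists
    exact (hB (mem_insert_of_mem _ ⟨k, rfl⟩)).not_gt hk
  obtain ⟨N, hN⟩ := (hdefect ε hε).exists_forall_of_atTop
  refine ⟨t N + 1, fun s hs s' hs' hNs hss' => ?_⟩
  obtain ⟨k, hNk, rfl⟩ := exists_index_of_mem_insert_range hmono (fun k => norm_nonneg _) hs hNs
  obtain ⟨l, hkl, rfl⟩ := exists_index_of_mem_insert_range hmono (fun k => norm_nonneg _) hs'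
    (hNs.trans hss')
  rw [hγ, hγ, hγ0, sub_zero, abs_of_nonneg (by linarith [norm_sub_norm_le (y l) (y k)])]
  exact hN k hNk l (hmono.le_iff_le.1 hss')

lemma isBusemannPoint_of_tendsto_phi [ProperSpace E] {h : E → ℝ} (hh : IsHorofunction h)
    {y : ℕ → E} (hdefect : ∀ ε > 0, ∀ᶠ k in atTop, ∀ l ≥ k, ‖y l - y k‖ + ‖y k‖ - ‖y l‖ < ε)
    (hlim : ∀ x, Tendsto (fun k => phi (y k) x) atTop (𝓝 (h x))) : IsBusemannPoint h := by
  have hy := tendsto_norm_atTop_of_tendsto_phi hlim hh.2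
  obtain ⟨ψ, hψ, hmono⟩ : ∃ ψ : ℕ → ℕ, StrictMono ψ ∧ StrictMono fun k => ‖(y ∘ ψ) k‖ :=
    strictMono_subseq_of_tendsto_atTop hy
  refine ⟨hh, _, _, isAlmostGeodesic_extend (y := y ∘ ψ) hmono (hy.comp hψ.tendsto_atTop)
    fun ε hε => ?_, fun K hK ε hε => ?_⟩
  · filter_upwards [hψ.tendsto_atTop.eventually (hdefect ε hε)] with k hk l hkl
    exact hk (ψ l) (hψ.monotone hkl)
  obtain ⟨N, hN⟩ := (Metric.tendstoUniformlyOn_iff.1 (tendstoUniformlyOn_phi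
    (fun x => (hlim x).comp hψ.tendsto_atTop) hK) ε hε).exists_forall_of_atTop
  refine ⟨‖y (ψ N)‖ + 1, fun s hs hNs x hx => ?_⟩
  obtain ⟨k, hNk, rfl⟩ := exists_index_of_mem_insert_range hmono (fun k => norm_nonneg _) hs hNs
  rw [hmono.injective.extend_apply, abs_sub_comm]
  exact hN k hNk x hx

end Metric

section Ray

variable {u : V}

lemma antitone_norm_smul_add_sub (hu : ‖u‖ = 1) (w : V) :
    Antitone fun A : ℝ => ‖A • u + w‖ - A := by
  intro A A' hAA'
  have : ‖A' • u + w‖ ≤ (A' - A) + ‖A • u + w‖ :=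
    calc ‖A' • u + w‖ = ‖(A' - A) • u + (A • u + w)‖ := by congr 1; module
      _ ≤ ‖(A' - A) • u‖ + ‖A • u + w‖ := norm_add_le _ _
      _ = (A' - A) + ‖A • u + w‖ := by
        rw [norm_smul, hu, mul_one, Real.norm_of_nonneg (sub_nonneg.2 hAA')]
  linarith

lemma neg_norm_le_norm_smul_add_sub (hu : ‖u‖ = 1) (w : V) (A : ℝ) :
    -‖w‖ ≤ ‖A • u + w‖ - A := by
  have := norm_sub_norm_le (A • u) (-w)
  rw [sub_neg_eq_add, norm_neg, norm_smul, hu, mul_one, Real.norm_eq_abs] at this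
  linarith [le_abs_self A]

lemma tendsto_norm_smul_add_sub (hu : ‖u‖ = 1) {a : ℕ → ℝ} (ha : Tendsto a atTop atTop)
    {w : ℕ → V} {w₀ : V} (hw : Tendsto w atTop (𝓝 w₀)) :
    Tendsto (fun n => ‖a n • u + w n‖ - a n) atTop (𝓝 (⨅ A : ℝ, ‖A • u + w₀‖ - A)) := by
  have h₀ := (tendsto_atTop_ciInf (antitone_norm_smul_add_sub hu w₀)
    ⟨-‖w₀‖, forall_mem_range.2 (neg_norm_le_norm_smul_add_sub hu w₀)⟩).comp ha
  have hd : Tendsto (fun n => (‖a n • u + w n‖ - a n) - (‖a n • u + w₀‖ - a n)) atTop (𝓝 0) := by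
    refine squeeze_zero_norm (fun n => ?_) (by simpa using (tendsto_sub_nhds_zero_iff.2 hw).norm)
    simpa using abs_norm_sub_norm_le (a n • u + w n) (a n • u + w₀)
  simpa using hd.add h₀

lemma isBusemannPoint_of_tendsto_sub_smul [ProperSpace V] {h : V → ℝ}
    (hh : IsHorofunction h) (hu : ‖u‖ = 1) {a : ℕ → ℝ} (ha : Tendsto a atTop atTop)
    {z : ℕ → V} {w : V} (hz : Tendsto (fun n => z n - a n • u) atTop (𝓝 w))
    (hlim : ∀ x, Tendsto (fun n => phi (z n) x) atTop (𝓝 (h x))) : IsBusemannPoint h := by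
  set c : V → ℝ := fun w' => ⨅ A : ℝ, ‖A • u + w'‖ - A
  have hray : ∀ {a : ℕ → ℝ} {w' : ℕ → V}, Tendsto a atTop atTop → Tendsto w' atTop (𝓝 w) →
      ∀ x, Tendsto (fun n => phi (a n • u + w' n) x) atTop (𝓝 (c (w - x) - c w)) := by
    intro a w' ha hw' x
    convert (tendsto_norm_smul_add_sub hu ha (hw'.sub_const x)).sub
      (tendsto_norm_smul_add_sub hu ha hw') using 2 with n
    simp only [phi, add_sub_assoc]
    ring
  have hhc : h = fun x => c (w - x) - c w := funext fun x =>
    tendsto_nhds_unique (hlim x) (by simpa using hray ha hz x)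
  refine isBusemannPoint_of_tendsto_phi hh (y := fun k : ℕ => (k : ℝ) • u + w) (fun ε hε => ?_)
    (hhc ▸ hray tendsto_natCast_atTop_atTop tendsto_const_nhds)
  filter_upwards [(tendsto_norm_smul_add_sub hu tendsto_natCast_atTop_atTop
    tendsto_const_nhds).eventually (eventually_lt_nhds (lt_add_of_pos_right (c w) hε))]
    with k hk l hkl
  have hlk : ‖((l : ℝ) • u + w) - ((k : ℝ) • u + w)‖ = l - k := by
    rw [add_sub_add_right_eq_sub, ← sub_smul, norm_smul, hu, mul_one,
      Real.norm_of_nonneg (sub_nonneg.2 (Nat.cast_le.2 hkl))]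
  have hcl : c w ≤ ‖(l : ℝ) • u + w‖ - l :=
    ciInf_le ⟨-‖w‖, forall_mem_range.2 (neg_norm_le_norm_smul_add_sub hu w)⟩ _
  rw [hlk]
  linarith

end Ray

section NormGap

def normGap (L : StrongDual ℝ V) (w : V) : ℝ := ‖w‖ - L w

variable {L : StrongDual ℝ V} {u v : V}

lemma normGap_nonneg (hL : ‖L‖ ≤ 1) (w : V) : 0 ≤ normGap L w := by
  have := L.le_of_opNorm_le hL w
  rw [one_mul, Real.norm_eq_abs] at this
  exact sub_nonneg.2 ((le_abs_self _).trans this)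

lemma normGap_add_le (L : StrongDual ℝ V) (w w' : V) :
    normGap L (w + w') ≤ normGap L w + normGap L w' := by
  simp only [normGap, map_add]
  linarith [norm_add_le w w']

lemma normGap_smul (L : StrongDual ℝ V) {c : ℝ} (hc : 0 ≤ c) (w : V) :
    normGap L (c • w) = c * normGap L w := by
  simp only [normGap, norm_smul, map_smul, smul_eq_mul, Real.norm_of_nonneg hc]
  ring

lemma phi_eq_normGap (L : StrongDual ℝ V) (w x : V) :
    phi w x = -L x + (normGap L (w - x) - normGap L w) := by
  simp only [phi, normGap, map_sub]
  ring

lemma abs_normGap_sub_sub_le (hL : ‖L‖ ≤ 1) {z x : V} {ρ M : ℝ} (hρ : 0 < ρ)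
    (h₁ : normGap L (z - (1 + ρ) • x) ≤ M) (h₂ : normGap L (z + ρ • x) ≤ M) :
    |normGap L (z - x) - normGap L z| ≤ M / ρ := by
  have i₁ := normGap_add_le L (ρ • z) (z - (1 + ρ) • x)
  have i₂ := normGap_add_le L (ρ • (z - x)) (z + ρ • x)
  rw [show ρ • z + (z - (1 + ρ) • x) = (1 + ρ) • (z - x) by module,
    normGap_smul L (by positivity), normGap_smul L hρ.le] at i₁
  rw [show ρ • (z - x) + (z + ρ • x) = (1 + ρ) • z by module,
    normGap_smul L (by positivity), normGap_smul L hρ.le] at i₂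
  rw [le_div_iff₀ hρ, ← abs_of_pos hρ, ← abs_mul, abs_le]
  constructor <;> linarith [normGap_nonneg hL (z - x), normGap_nonneg hL z]

/-- The line `L = 1` touches the unit sphere at `u` tangentially on the side of `v`. -/
def TangentAlong (L : StrongDual ℝ V) (u v : V) : Prop :=
  ∀ ε > 0, ∃ σ > 0, ∀ α β : ℝ, 0 ≤ β → β ≤ σ * α → normGap L (α • u + β • v) ≤ ε * β

lemma tangentAlong_of_forall_exists (hLu : L u = ‖u‖)
    (h : ∀ ε > 0, ∃ σ > 0, normGap L (u + σ • v) ≤ ε * σ) : TangentAlong L u v := by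
  intro ε hε
  obtain ⟨σ, hσ, hgap⟩ := h ε hε
  refine ⟨σ, hσ, fun α β hβ hβα => ?_⟩
  have hβσ : 0 ≤ α - β / σ := sub_nonneg.2 ((div_le_iff₀ hσ).2 (by linarith))
  calc normGap L (α • u + β • v)
      = normGap L ((β / σ) • (u + σ • v) + (α - β / σ) • u) := by
        congr 1
        rw [smul_add, smul_smul, div_mul_cancel₀ _ hσ.ne']
        module
    _ ≤ β / σ * normGap L (u + σ • v) + (α - β / σ) * normGap L u := by
        grw [normGap_add_le, normGap_smul L (by positivity), normGap_smul L hβσ]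
    _ ≤ β / σ * (ε * σ) := by
        rw [show normGap L u = 0 from sub_eq_zero.2 hLu.symm, mul_zero, add_zero]
        gcongr
    _ = ε * β := by field_simp

def normingFunctionals (u : V) : Set (StrongDual ℝ V) := {f | ‖f‖ ≤ 1 ∧ f u = ‖u‖}

lemma isCompact_normingFunctionals [FiniteDimensional ℝ V] (u : V) :
    IsCompact (normingFunctionals u) :=
  (isCompact_closedBall (0 : StrongDual ℝ V) 1).of_isClosed_subset
    ((isClosed_le continuous_norm continuous_const).inter
      (isClosed_eq ((ContinuousLinearMap.apply ℝ ℝ u).continuous) continuous_const))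
    fun _ hf => mem_closedBall_zero_iff.2 hf.1

lemma normingFunctionals_nonempty (u : V) : (normingFunctionals u).Nonempty :=
  exists_dual_vector'' ℝ u

lemma tangentAlong_of_isMaxOn [FiniteDimensional ℝ V] (hu : ‖u‖ = 1) (hL : L ∈ normingFunctionals u)
    (hmax : IsMaxOn (fun f => f v) (normingFunctionals u) L) : TangentAlong L u v := by
  refine tangentAlong_of_forall_exists hL.2 fun ε hε => ?_
  by_contra! hcon
  set σ : ℕ → ℝ := fun j => 1 / ((j : ℝ) + 1)
  have hσ : ∀ j, 0 < σ j := fun j => by positivity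
  choose f hf1 hf using fun j => exists_dual_vector'' ℝ (u + σ j • v)
  have hfu : ∀ j, f j u ≤ 1 := fun j => by
    simpa [hu] using (le_abs_self _).trans ((f j).le_of_opNorm_le (hf1 j) u)
  have hfv : ∀ j, |f j v| ≤ ‖v‖ := fun j => by
    simpa using (f j).le_of_opNorm_le (hf1 j) v
  have hf' : ∀ j, ‖u + σ j • v‖ = f j u + σ j * f j v := fun j => by
    simpa [map_add, map_smul] using (hf j).symm
  have hgt : ∀ j, L v + ε ≤ f j v := fun j => by
    have h₁ := hcon (σ j) (hσ j)
    rw [normGap, hf', map_add, map_smul, hL.2, hu, smul_eq_mul] at h₁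
    nlinarith [hfu j, hσ j]
  obtain ⟨f₀, hf₀, ψ, hψ, hlim⟩ := (isCompact_closedBall (0 : StrongDual ℝ V) 1).tendsto_subseq
    fun j => mem_closedBall_zero_iff.2 (hf1 j)
  have heval : ∀ x, Tendsto (fun j => f (ψ j) x) atTop (𝓝 (f₀ x)) := fun x =>
    ((ContinuousLinearMap.apply ℝ ℝ x).continuous.tendsto f₀).comp hlim
  have hσψ : Tendsto (fun j => σ (ψ j)) atTop (𝓝 0) :=
    tendsto_one_div_add_atTop_nhds_zero_nat.comp hψ.tendsto_atTop
  have hf₀u : f₀ u = ‖u‖ := by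
    refine le_antisymm ?_ ?_
    · simpa using (le_abs_self _).trans (f₀.le_of_opNorm_le (mem_closedBall_zero_iff.1 hf₀) u)
    · refine le_of_tendsto_of_tendsto' (f := fun j => 1 - 2 * (σ (ψ j) * ‖v‖))
        (by simpa [hu] using ((hσψ.mul_const ‖v‖).const_mul 2).const_sub 1) (heval u) fun j => ?_
      have := norm_sub_norm_le u (-(σ (ψ j) • v))
      rw [sub_neg_eq_add, norm_neg, norm_smul, Real.norm_of_nonneg (hσ _).le, hu, hf'] at this
      nlinarith [abs_le.1 (hfv (ψ j)), hσ (ψ j)]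
  have : L v + ε ≤ f₀ v := ge_of_tendsto (heval v) (Eventually.of_forall fun j => hgt (ψ j))
  linarith [isMaxOn_iff.1 hmax f₀ ⟨mem_closedBall_zero_iff.1 hf₀, hf₀u⟩]

lemma exists_tangentAlong [FiniteDimensional ℝ V] (hu : ‖u‖ = 1) (v : V) :
    ∃ L : StrongDual ℝ V, ‖L‖ ≤ 1 ∧ L u = 1 ∧ TangentAlong L u v := by
  obtain ⟨L, hL, hmax⟩ := (isCompact_normingFunctionals u).exists_isMaxOn
    (normingFunctionals_nonempty u) (ContinuousLinearMap.apply ℝ ℝ v).continuous.continuousOn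
  exact ⟨L, hL.1, hL.2.trans hu, tangentAlong_of_isMaxOn hu hL hmax⟩

lemma normGap_sub_le_of_cone {ε σ : ℝ} (hε : 0 ≤ ε) (hσ : 0 < σ)
    (hcone : ∀ α β : ℝ, 0 ≤ β → β ≤ σ * α → normGap L (α • u + β • v) ≤ ε * β)
    {a b p q : ℝ} (hp : |p| ≤ b / 2) (hq : |q| ≤ b / 2) (hba : b < a) (hσb : 3 * b < σ * a) :
    normGap L (a • u + b • v - (p • u + q • v)) ≤ ε * (3 / 2 * b) := by
  rw [abs_le] at hp hq
  rw [show a • u + b • v - (p • u + q • v) = (a - p) • u + (b - q) • v by module]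
  refine (hcone _ _ (by linarith) ?_).trans (by gcongr; linarith)
  nlinarith

lemma tendsto_normGap_sub_sub_normGap (hL : ‖L‖ ≤ 1) (htan : TangentAlong L u v)
    {a b : ℕ → ℝ} (ha : Tendsto a atTop atTop) (hb : Tendsto b atTop atTop)
    (hab : Tendsto (fun n => b n / a n) atTop (𝓝 0)) (p q : ℝ) :
    Tendsto (fun n => normGap L (a n • u + b n • v - (p • u + q • v)) -
      normGap L (a n • u + b n • v)) atTop (𝓝 0) := by
  rw [Metric.tendsto_nhds]
  intro ε hε
  set C := |p| + |q| + 1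
  have hpC : |p| ≤ C := by simp only [C]; linarith [abs_nonneg q]
  have hqC : |q| ≤ C := by simp only [C]; linarith [abs_nonneg p]
  have hC : 1 ≤ C := by simp only [C]; linarith [abs_nonneg p, abs_nonneg q]
  obtain ⟨σ, hσ, hcone⟩ := htan (ε / (7 * C)) (by positivity)
  filter_upwards [ha.eventually_gt_atTop 0, hb.eventually_ge_atTop (4 * C),
    hab.eventually (eventually_lt_nhds (lt_min one_pos (by positivity : 0 < σ / 3)))]
    with n han hbn hsn
  rw [lt_min_iff, div_lt_iff₀ han, div_lt_iff₀ han] at hsn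
  have hb0 : 0 < b n := by linarith
  set ρ := b n / (4 * C)
  have hρ : 1 ≤ ρ := (le_div_iff₀ (by positivity)).2 (by linarith)
  have hbound : ∀ τ, |τ| ≤ 2 * ρ →
      normGap L (a n • u + b n • v - τ • (p • u + q • v)) ≤ ε / (7 * C) * (3 / 2 * b n) := by
    intro τ hτ
    have hτC : |τ| * C ≤ b n / 2 := by
      calc |τ| * C ≤ 2 * ρ * C := by gcongr
        _ = b n / 2 := by simp only [ρ]; field_simp; ring
    rw [smul_add, smul_smul, smul_smul]
    exact normGap_sub_le_of_cone (by positivity) hσ hcone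
      (by rw [abs_mul]; nlinarith [abs_nonneg τ]) (by rw [abs_mul]; nlinarith [abs_nonneg τ])
      (by linarith) (by linarith)
  have h₁ := hbound (1 + ρ) (by rw [abs_of_pos (by linarith)]; linarith)
  have h₂ := hbound (-ρ) (by rw [abs_neg, abs_of_pos (by linarith)]; linarith)
  rw [neg_smul, sub_neg_eq_add] at h₂
  rw [Real.dist_eq, sub_zero]
  calc _ ≤ ε / (7 * C) * (3 / 2 * b n) / ρ := abs_normGap_sub_sub_le hL (by linarith) h₁ h₂
    _ = 6 / 7 * ε := by simp only [ρ]; field_simp; ring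
    _ < ε := by linarith

lemma exists_antitone_pos_le {c : ℕ → ℝ} (hc : ∀ k, 0 < c k) :
    ∃ σ : ℕ → ℝ, Antitone σ ∧ (∀ k, 0 < σ k) ∧ ∀ k, σ k ≤ c k :=
  ⟨fun k => (Finset.range (k + 1)).inf' Finset.nonempty_range_add_one c,
    fun _ _ hkl => Finset.inf'_mono _ (Finset.range_subset_range.2 (by omega)) _,
    fun _ => (Finset.lt_inf'_iff _).2 fun j _ => hc j,
    fun k => Finset.inf'_le _ (Finset.self_mem_range_succ k)⟩

lemma exists_seq_normGap_le (htan : TangentAlong L u v) :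
    ∃ A : ℕ → ℝ, Tendsto A atTop atTop ∧ Tendsto (fun k : ℕ => (k : ℝ) / A k) atTop (𝓝 0) ∧
      ∀ k l : ℕ, k ≤ l → normGap L ((A l - A k) • u + ((l : ℝ) - k) • v) +
        normGap L (A k • u + (k : ℝ) • v) ≤ 2 / ((k : ℝ) + 1) := by
  choose S hS hcone using fun k : ℕ => htan (1 / ((k : ℝ) + 1) ^ 2) (by positivity)
  -- antitone slopes keep `(A l - A k) • u + (l - k) • v` inside the `l`-th cone
  obtain ⟨σ, hσanti, hσpos, hσle⟩ : ∃ σ : ℕ → ℝ, Antitone σ ∧ (∀ k, 0 < σ k) ∧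
      ∀ k, σ k ≤ min (S k) (1 / ((k : ℝ) + 1)) :=
    exists_antitone_pos_le fun k => lt_min (hS k) (by positivity)
  have hcone' : ∀ k α β, 0 ≤ β → β ≤ σ k * α →
      normGap L (α • u + β • v) ≤ 1 / ((k : ℝ) + 1) ^ 2 * β := by
    intro k α β hβ hβα
    have hα : 0 ≤ α := (mul_nonneg_iff_of_pos_left (hσpos k)).1 (hβ.trans hβα)
    exact hcone k α β hβ (hβα.trans (by gcongr; exact (hσle k).trans (min_le_left _ _)))
  have hsmall : ∀ m : ℕ, ∀ β : ℝ, β ≤ m + 1 → 1 / ((m : ℝ) + 1) ^ 2 * β ≤ 1 / ((m : ℝ) + 1) := by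
    intro m β hβ
    rw [div_mul_eq_mul_div, one_mul, div_le_div_iff₀ (by positivity) (by positivity)]
    nlinarith
  refine ⟨fun k => k / σ k, ?_, ?_, fun k l hkl => ?_⟩
  · refine tendsto_atTop_mono (fun k => le_div_self (Nat.cast_nonneg k) (hσpos k) ?_)
      tendsto_natCast_atTop_atTop
    exact (hσle k).trans ((min_le_right _ _).trans
      (div_le_one_of_le₀ (by linarith) (by positivity)))
  · refine squeeze_zero (fun k => div_nonneg k.cast_nonneg (div_nonneg k.cast_nonneg (hσpos k).le))
      (fun k => ?_) tendsto_one_div_add_atTop_nhds_zero_nat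
    rcases eq_or_ne (k : ℝ) 0 with hk | hk
    · simp [hk]
    · rw [div_div_cancel₀ hk]
      exact (hσle k).trans (min_le_right _ _)
  have hkl' : (k : ℝ) ≤ l := Nat.cast_le.2 hkl
  have h₁ := hcone' k (k / σ k) k (Nat.cast_nonneg k) (by rw [mul_div_cancel₀ _ (hσpos k).ne'])
  have h₂ := hcone' l (l / σ l - k / σ k) (l - k) (by linarith) (by
    rw [mul_sub, mul_div_cancel₀ _ (hσpos l).ne', mul_div_assoc']
    have : σ l * k / σ k ≤ k :=
      (div_le_iff₀ (hσpos k)).2 (by nlinarith [hσanti hkl, k.cast_nonneg (α := ℝ)])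
    linarith)
  have h₃ := hsmall l (l - k) (by linarith [Nat.cast_nonneg (α := ℝ) k])
  have h₄ := hsmall k k (by linarith)
  have h₅ : 1 / ((l : ℝ) + 1) ≤ 1 / ((k : ℝ) + 1) := by gcongr
  rw [show (2 : ℝ) / (k + 1) = 1 / (k + 1) + 1 / (k + 1) by ring]
  linarith

lemma isBusemannPoint_of_eq_smul_add_smul [FiniteDimensional ℝ V] {h : V → ℝ}
    (hh : IsHorofunction h) (hu : ‖u‖ = 1) (hspan : ∀ x, ∃ p q : ℝ, x = p • u + q • v) {a b : ℕ → ℝ}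
    (ha : Tendsto a atTop atTop) (hb : Tendsto b atTop atTop)
    (hab : Tendsto (fun n => b n / a n) atTop (𝓝 0)) {z : ℕ → V}
    (hz : ∀ n, z n = a n • u + b n • v)
    (hlim : ∀ x, Tendsto (fun n => phi (z n) x) atTop (𝓝 (h x))) : IsBusemannPoint h := by
  obtain ⟨L, hL, -, htan⟩ := exists_tangentAlong hu v
  have hphi : ∀ {a' b' : ℕ → ℝ}, Tendsto a' atTop atTop → Tendsto b' atTop atTop →
      Tendsto (fun n => b' n / a' n) atTop (𝓝 0) →
      ∀ x, Tendsto (fun n => phi (a' n • u + b' n • v) x) atTop (𝓝 (-L x)) := by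
    intro a' b' ha' hb' hab' x
    obtain ⟨p, q, rfl⟩ := hspan x
    simpa [phi_eq_normGap L] using
      tendsto_const_nhds.add (tendsto_normGap_sub_sub_normGap hL htan ha' hb' hab' p q)
  have hhL : h = fun x => -L x := funext fun x =>
    tendsto_nhds_unique (hlim x) (by simpa only [hz] using hphi ha hb hab x)
  obtain ⟨A, hA, hkA, hgap⟩ := exists_seq_normGap_le htan
  refine isBusemannPoint_of_tendsto_phi hh (y := fun k : ℕ => A k • u + (k : ℝ) • v)
    (fun ε hε => ?_) (hhL ▸ hphi hA tendsto_natCast_atTop_atTop hkA)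
  filter_upwards [((tendsto_one_div_add_atTop_nhds_zero_nat (𝕜 := ℝ)).const_mul 2).eventually
    (eventually_lt_nhds (by simpa using hε))] with k hk l hkl
  have hdef : ∀ w w' : V, ‖w' - w‖ + ‖w‖ - ‖w'‖ =
      normGap L (w' - w) + normGap L w - normGap L w' := fun w w' => by
    simp only [normGap, map_sub]
    ring
  rw [hdef, show A l • u + (l : ℝ) • v - (A k • u + (k : ℝ) • v) =
    (A l - A k) • u + ((l : ℝ) - k) • v by module]
  have := hgap k l hkl
  rw [mul_one_div] at hk
  linarith [normGap_nonneg hL (A l • u + (l : ℝ) • v)]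

end NormGap

lemma exists_subseq_tendsto_or_tendsto_atTop_or_tendsto_atBot (b : ℕ → ℝ) :
    (∃ c : ℝ, ∃ φ : ℕ → ℕ, StrictMono φ ∧ Tendsto (b ∘ φ) atTop (𝓝 c)) ∨
      (∃ φ : ℕ → ℕ, StrictMono φ ∧ Tendsto (b ∘ φ) atTop atTop) ∨
      Tendsto b atTop atBot := by
  by_cases hbdd : ∃ B, ∃ᶠ n in atTop, |b n| ≤ B
  · obtain ⟨B, hB⟩ := hbdd
    obtain ⟨c, -, φ, hφ, hc⟩ := tendsto_subseq_of_frequently_bounded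
      (Metric.isBounded_closedBall (x := (0 : ℝ)) (r := B)) (hB.mono fun n hn => by simpa using hn)
    exact Or.inl ⟨c, φ, hφ, hc⟩
  push Not at hbdd
  have habs : Tendsto (fun n => |b n|) atTop atTop :=
    tendsto_atTop.2 fun B => (hbdd B).mono fun _ => le_of_lt
  by_cases hpos : ∃ᶠ n in atTop, 0 ≤ b n
  · obtain ⟨φ, hφ, hφpos⟩ := extraction_of_frequently_atTop hpos
    exact Or.inr (Or.inl ⟨φ, hφ,
      (habs.comp hφ.tendsto_atTop).congr fun n => abs_of_nonneg (hφpos n)⟩)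
  · refine Or.inr (Or.inr (tendsto_neg_atTop_iff.1 (habs.congr' ?_)))
    filter_upwards [not_frequently.1 hpos] with n hn using abs_of_neg (not_le.1 hn)

lemma exists_subseq_tendsto_normalize [FiniteDimensional ℝ V] {z : ℕ → V}
    (hz : Tendsto (fun n => ‖z n‖) atTop atTop) :
    ∃ u : V, ‖u‖ = 1 ∧ ∃ ψ : ℕ → ℕ, StrictMono ψ ∧
      Tendsto (fun n => ‖z (ψ n)‖⁻¹ • z (ψ n)) atTop (𝓝 u) := by
  obtain ⟨u, hu, ψ, hψ, hlim⟩ := (isCompact_sphere (0 : V) 1).tendsto_subseq'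
    (x := fun n => ‖z n‖⁻¹ • z n) ((hz.eventually_gt_atTop 0).mono fun n hn => by
      simp [norm_smul, inv_mul_cancel₀ hn.ne']).frequently
  exact ⟨u, by simpa using hu, ψ, hψ, hlim⟩

lemma exists_eq_smul_add_smul (hdim : Module.finrank ℝ V = 2) {u : V} (hu : u ≠ 0) :
    ∃ (v : V) (ξ η : V →L[ℝ] ℝ), ξ u = 1 ∧ η u = 0 ∧ ∀ x, x = ξ x • u + η x • v := by
  have : FiniteDimensional ℝ V := Module.finite_of_finrank_eq_succ hdim
  obtain ⟨v, hv⟩ : ∃ v, v ∉ ℝ ∙ u := by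
    by_contra! hall
    have := finrank_span_singleton (K := ℝ) hu
    rw [Submodule.eq_top_iff'.2 hall, finrank_top, hdim] at this
    norm_num at this
  have hli : LinearIndependent ℝ ![u, v] :=
    (LinearIndependent.pair_iff' hu).2 fun a hav => hv (hav ▸ Submodule.smul_mem _ a
      (Submodule.mem_span_singleton_self u))
  set e := basisOfLinearIndependentOfCardEqFinrank hli (by simp [hdim])
  have he : ⇑e = ![u, v] := coe_basisOfLinearIndependentOfCardEqFinrank hli _
  have he0 : e 0 = u := by simp [he]
  refine ⟨v, (e.coord 0).toContinuousLinearMap, (e.coord 1).toContinuousLinearMap, ?_, ?_,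
    fun x => ?_⟩
  · simp [← he0]
  · simp [← he0]
  · simpa [Fin.sum_univ_two, he] using (e.sum_repr x).symm

lemma tendsto_coord_of_tendsto_normalize {u : V} {ξ η : V →L[ℝ] ℝ} (hξ : ξ u = 1) (hη : η u = 0)
    {z : ℕ → V} (hz : Tendsto (fun n => ‖z n‖) atTop atTop)
    (hdir : Tendsto (fun n => ‖z n‖⁻¹ • z n) atTop (𝓝 u)) :
    Tendsto (fun n => ξ (z n)) atTop atTop ∧
      Tendsto (fun n => η (z n) / ξ (z n)) atTop (𝓝 0) := by
  have hξdir := hξ ▸ (ξ.continuous.tendsto u).comp hdir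
  have hηdir := hη ▸ (η.continuous.tendsto u).comp hdir
  constructor
  · refine (hz.atTop_mul_pos one_pos hξdir).congr fun n => ?_
    rcases eq_or_ne ‖z n‖ 0 with h0 | h0
    · simp [norm_eq_zero.1 h0]
    · simp [map_smul, ← mul_assoc, mul_inv_cancel₀ h0]
  · refine (zero_div (1 : ℝ) ▸ hηdir.div hξdir one_ne_zero).congr fun n => ?_
    simp only [Pi.div_apply, Function.comp_apply]
    rcases eq_or_ne ‖z n‖ 0 with h0 | h0
    · simp [norm_eq_zero.1 h0]
    · simp [map_smul, mul_div_mul_left _ _ (inv_ne_zero h0)]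

theorem two_dim_horofunctions_busemann (V : Type*) [NormedAddCommGroup V]
    [NormedSpace ℝ V] [FiniteDimensional ℝ V] (hdim : Module.finrank ℝ V = 2)
    (h : V → ℝ) (hh : IsHorofunction h) : IsBusemannPoint h := by
  obtain ⟨⟨z, hz⟩, hnot⟩ := id hh
  have hlim : ∀ x, Tendsto (fun n => phi (z n) x) atTop (𝓝 (h x)) := fun x =>
    (hz {x} isCompact_singleton).tendsto_at rfl
  have hnorm := tendsto_norm_atTop_of_tendsto_phi hlim hnot
  obtain ⟨u, hu, ψ, hψ, hdir⟩ := exists_subseq_tendsto_normalize hnorm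
  obtain ⟨v, ξ, η, hξ, hη, hspan⟩ :=
    exists_eq_smul_add_smul hdim (norm_ne_zero_iff.1 (hu ▸ one_ne_zero))
  obtain ⟨ha, hab⟩ := tendsto_coord_of_tendsto_normalize hξ hη (hnorm.comp hψ.tendsto_atTop) hdir
  have hzψ : ∀ n, z (ψ n) = ξ (z (ψ n)) • u + η (z (ψ n)) • v := fun n => hspan _
  have hlimψ := fun x => (hlim x).comp hψ.tendsto_atTop
  rcases exists_subseq_tendsto_or_tendsto_atTop_or_tendsto_atBot (fun n => η (z (ψ n))) with
    ⟨c, φ, hφ, hc⟩ | ⟨φ, hφ, hb⟩ | hb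
  · refine isBusemannPoint_of_tendsto_sub_smul hh hu (ha.comp hφ.tendsto_atTop) (w := c • v) ?_
      fun x => (hlimψ x).comp hφ.tendsto_atTop
    exact (hc.smul_const v).congr fun n => eq_sub_of_add_eq' (hzψ (φ n)).symm
  · exact isBusemannPoint_of_eq_smul_add_smul hh hu (fun x => ⟨_, _, hspan x⟩)
      (ha.comp hφ.tendsto_atTop) hb (hab.comp hφ.tendsto_atTop) (fun n => hzψ (φ n))
      fun x => (hlimψ x).comp hφ.tendsto_atTop
  · refine isBusemannPoint_of_eq_smul_add_smul hh hu (v := -v)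
      (fun x => ⟨ξ x, -η x, by simpa using hspan x⟩) ha (tendsto_neg_atBot_atTop.comp hb) ?_
      (fun n => by simpa using hzψ n) hlimψ
    simpa [neg_div] using hab.neg
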